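/- For every n ≥ 1, every a : ℕ, and every b < 2^n: if T^[n](b) is even then T^[(n+1)](2^(n+1)*a + b) = 3^(m(b,n)) * a + T^[n](b)/2, and if T^[n](b) is odd then T^[(n+1)](2^(n+1)*a + b) = 3^(m(b,n)+1) * a + (3*T^[n](b)+1)/2. -/

import Mathlib

def T (N : ℕ) : ℕ := if N % 2 = 0 then N / 2 else (3 * N + 1) / 2

def m (b n : ℕ) : ℕ := ((Finset.range n).filter (fun k => Odd (T^[k] b))).card

/-!
Writing `N = 2^n a + b`, the first `n` Collatz steps only see `b` modulo `2^n`: each step halves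
the `2^k a` part, and multiplies it by `3` exactly when the current iterate of `b` is odd. Hence
`T^[n] (2^n a + b) = 3^(m b n) a + T^[n] b`, and one more step applied to
`2 (3^(m b n) a) + T^[n] b` is decided by the parity of `T^[n] b`.
-/

lemma T_of_even {N : ℕ} (h : Even N) : T N = N / 2 := by
  simp [T, Nat.even_iff.mp h]

lemma T_of_odd {N : ℕ} (h : Odd N) : T N = (3 * N + 1) / 2 := by
  simp [T, Nat.odd_iff.mp h]

lemma T_two_mul_add (c b : ℕ) : T (2 * c + b) = 3 ^ (if Odd b then 1 else 0) * c + T b := by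
  rcases Nat.even_or_odd b with hb | hb
  · rw [T_of_even hb, T_of_even ((even_two_mul c).add hb), if_neg (Nat.not_odd_iff_even.mpr hb)]
    omega
  · rw [T_of_odd hb, T_of_odd ((even_two_mul c).add_odd hb), if_pos hb]
    omega

lemma m_eq_sum (b n : ℕ) : m b n = ∑ k ∈ Finset.range n, if Odd (T^[k] b) then 1 else 0 :=
  Finset.card_filter _ _

lemma m_succ (b n : ℕ) : m b (n + 1) = m (T b) n + if Odd b then 1 else 0 := by
  simp only [m_eq_sum, Finset.sum_range_succ', Function.iterate_succ_apply,
    Function.iterate_zero_apply]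
  -- the sides differ only in the `Decidable (Odd _)` instance chosen by `Finset.card_filter`
  rfl

lemma iterate_T_two_pow_mul_add (n a b : ℕ) :
    T^[n] (2 ^ n * a + b) = 3 ^ m b n * a + T^[n] b := by
  induction n generalizing a b with
  | zero => simp [m]
  | succ n ih =>
    have hstep : T (2 ^ (n + 1) * a + b) = 2 ^ n * (3 ^ (if Odd b then 1 else 0) * a) + T b := by
      rw [pow_succ', mul_assoc, T_two_mul_add]
      ring
    rw [Function.iterate_succ_apply, Function.iterate_succ_apply, hstep, ih, m_succ, pow_add]
    ring

theorem stmt16 : ∀ n ≥ 1, ∀ a : ℕ, ∀ b < 2 ^ n,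
    (Even (T^[n] b) → T^[n + 1] (2 ^ (n + 1) * a + b) = 3 ^ m b n * a + T^[n] b / 2) ∧
    (Odd (T^[n] b) → T^[n + 1] (2 ^ (n + 1) * a + b) = 3 ^ (m b n + 1) * a + (3 * T^[n] b + 1) / 2) := by
  intro n _ a b _
  have hlast : T^[n + 1] (2 ^ (n + 1) * a + b)
      = 3 ^ (if Odd (T^[n] b) then 1 else 0) * (3 ^ m b n * a) + T (T^[n] b) := by
    rw [Function.iterate_succ_apply', pow_succ, mul_assoc, iterate_T_two_pow_mul_add,
      ← T_two_mul_add]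
    congr 1
    ring
  refine ⟨fun he => ?_, fun ho => ?_⟩
  · rw [hlast, if_neg (Nat.not_odd_iff_even.mpr he), T_of_even he, pow_zero, one_mul]
  · rw [hlast, if_pos ho, T_of_odd ho, pow_succ]
    ring
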